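/- Suppose the excess loss r satisfies the (η,c)-central condition under P_W ⊗ μ for some η > 0 and 0 < c ≤ 1, i.e. 0 < R and log ∫ exp(−η·r) d(P_W ⊗ μ) ≤ −c·η·R. Then gen ≤ ((1 − c)/c)·R̂ + (1/(c·η·n)) ∑_{i=1}^n I(W;Z_i), and moreover R ≤ (1/c)·R̂ + (1/(c·η·n)) ∑_{i=1}^n I(W;Z_i). -/

import Mathlib

/-!
By the Donsker–Varadhan inequality applied to `P_i` against `P_W ⊗ μ` with the test function
`−η r`, the central condition yields `c R − I(W;Z_i)/η ≤ E_{P_i}[r]` for every `i`. Since each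
`Z_i` has law `μ`, averaging over `i` turns the right-hand side into `R̂`, and `gen = R − R̂`.
-/

open MeasureTheory Real

/-- Real-valued Kullback–Leibler divergence `D(P‖Q)`,
the integral of the log-likelihood ratio with respect to `P`. -/
noncomputable def klReal {α : Type*} [MeasurableSpace α] (P Q : Measure α) : ℝ :=
  ∫ x, llr P Q x ∂P

variable {W Z : Type*} [MeasurableSpace W] [MeasurableSpace Z]

/-- Population risk `L(w) = ∫ ℓ(w,z) dμ(z)`. -/
noncomputable def popRisk (μ : Measure Z) (ℓ : W × Z → ℝ) (w : W) : ℝ :=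
  ∫ z, ℓ (w, z) ∂μ

/-- Empirical risk `L̂(w,s) = (1/n) ∑ i, ℓ(w, s i)`. -/
noncomputable def empRisk (n : ℕ) (ℓ : W × Z → ℝ) (w : W) (s : Fin n → Z) : ℝ :=
  (1 / (n : ℝ)) * ∑ i, ℓ (w, s i)

/-- Expected generalization error `gen = E_P[L(W) − L̂(W,S_n)]`. -/
noncomputable def genErr (μ : Measure Z) (n : ℕ) (P : Measure (W × (Fin n → Z)))
    (ℓ : W × Z → ℝ) : ℝ :=
  ∫ p, (popRisk μ ℓ p.1 - empRisk n ℓ p.1 p.2) ∂P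

/-- Expected empirical excess risk `R̂ = E_P[L̂(W,S_n) − L̂(w*,S_n)]`. -/
noncomputable def empExcess (n : ℕ) (P : Measure (W × (Fin n → Z)))
    (ℓ : W × Z → ℝ) (wstar : W) : ℝ :=
  ∫ p, (empRisk n ℓ p.1 p.2 - empRisk n ℓ wstar p.2) ∂P

/-- Expected excess risk `R = ∫ r d(P_W ⊗ μ)` where `r(w,z) = ℓ(w,z) − ℓ(w*,z)`. -/
noncomputable def excessRisk (μ : Measure Z) {n : ℕ} (P : Measure (W × (Fin n → Z)))
    (ℓ : W × Z → ℝ) (wstar : W) : ℝ :=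
  ∫ p, (ℓ p - ℓ (wstar, p.2)) ∂((P.map Prod.fst).prod μ)

/-- Joint law `P_i` of `(W, Z_i)`: the pushforward of `P` under `(w,z) ↦ (w, z_i)`. -/
noncomputable def jointLaw {n : ℕ} (P : Measure (W × (Fin n → Z))) (i : Fin n) :
    Measure (W × Z) :=
  P.map fun p => (p.1, p.2 i)

/-- Mutual information `I(W;Z_i) = D(P_i ‖ P_W ⊗ μ)`. -/
noncomputable def mutInfo (μ : Measure Z) {n : ℕ} (P : Measure (W × (Fin n → Z)))
    (i : Fin n) : ℝ :=
  klReal (jointLaw P i) ((P.map Prod.fst).prod μ)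

section KullbackLeibler

variable {α : Type*} [MeasurableSpace α] {P Q : Measure α}

lemma klReal_nonneg [IsProbabilityMeasure P] [IsProbabilityMeasure Q] (hPQ : P ≪ Q)
    (hllr : Integrable (llr P Q) P) : 0 ≤ klReal P Q := by
  simpa [klReal] using InformationTheory.integral_llr_add_sub_measure_univ_nonneg hPQ hllr

/-- Donsker–Varadhan: the gap is `D(P ‖ Q_f)` for the tilted measure `dQ_f ∝ exp f dQ`. -/
lemma integral_le_klReal_add_log_integral_exp [IsProbabilityMeasure P] [SigmaFinite Q]
    (hPQ : P ≪ Q) (hllr : Integrable (llr P Q) P) {f : α → ℝ} (hf : Integrable f P)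
    (hexp : Integrable (fun x => exp (f x)) Q) :
    ∫ x, f x ∂P ≤ klReal P Q + log (∫ x, exp (f x) ∂Q) := by
  have : NeZero Q := ⟨fun hQ => IsProbabilityMeasure.ne_zero P
    (Measure.absolutelyContinuous_zero_iff.mp (hQ ▸ hPQ))⟩
  have := isProbabilityMeasure_tilted hexp
  have h := klReal_nonneg (hPQ.trans (absolutelyContinuous_tilted hexp))
    (integrable_llr_tilted_right hPQ hf hllr hexp)
  rw [klReal, integral_llr_tilted_right hPQ hf hexp hllr] at h
  rw [klReal]
  linarith

lemma sub_klReal_div_le_integral_of_log_integral_exp_le [IsProbabilityMeasure P]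
    [SigmaFinite Q] (hPQ : P ≪ Q) (hllr : Integrable (llr P Q) P) {f : α → ℝ}
    (hf : Integrable f P) {η b : ℝ} (hη : 0 < η)
    (hexp : Integrable (fun x => exp (-η * f x)) Q)
    (hmgf : log (∫ x, exp (-η * f x) ∂Q) ≤ -η * b) :
    b - klReal P Q / η ≤ ∫ x, f x ∂P := by
  have hdv := integral_le_klReal_add_log_integral_exp hPQ hllr (hf.const_mul (-η)) hexp
  rw [integral_const_mul] at hdv
  rw [sub_le_iff_le_add, ← sub_le_iff_le_add', le_div_iff₀ hη]
  linarith

end KullbackLeibler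

lemma sub_sum_div_le_average {n : ℕ} (hn : 0 < n) {a η : ℝ} {b x : Fin n → ℝ}
    (h : ∀ i, a - b i / η ≤ x i) : a - (∑ i, b i) / (η * n) ≤ 1 / n * ∑ i, x i := by
  have hsum := Finset.sum_le_sum fun i (_ : i ∈ Finset.univ) => h i
  simp only [Finset.sum_sub_distrib, Finset.sum_const, Finset.card_univ, Fintype.card_fin,
    nsmul_eq_mul, ← Finset.sum_div] at hsum
  have hn' : (0 : ℝ) < n := Nat.cast_pos.mpr hn
  calc a - (∑ i, b i) / (η * n) = 1 / n * (n * a - (∑ i, b i) / η) := by field_simp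
    _ ≤ 1 / n * ∑ i, x i := by gcongr

lemma MeasureTheory.MeasurePreserving.integral_comp_of_aestronglyMeasurable {α β : Type*}
    [MeasurableSpace α] [MeasurableSpace β] {μ : Measure α} {ν : Measure β} {f : α → β}
    (hf : MeasurePreserving f μ ν) {g : β → ℝ} (hg : AEStronglyMeasurable g ν) :
    ∫ x, g (f x) ∂μ = ∫ y, g y ∂ν := by
  rw [← hf.map_eq] at hg ⊢
  exact (integral_map hf.measurable.aemeasurable hg).symm

noncomputable def excessLoss (ℓ : W × Z → ℝ) (wstar : W) (p : W × Z) : ℝ :=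
  ℓ p - ℓ (wstar, p.2)

section Learning

variable {μ : Measure Z} {n : ℕ} {P : Measure (W × (Fin n → Z))} {ℓ : W × Z → ℝ} {wstar : W}

lemma measurePreserving_coord [IsProbabilityMeasure μ]
    (hmarg : P.map Prod.snd = Measure.pi fun _ : Fin n => μ) (i : Fin n) :
    MeasurePreserving (fun p : W × (Fin n → Z) => p.2 i) P μ :=
  (measurePreserving_eval (fun _ => μ) i).comp ⟨measurable_snd, hmarg⟩

lemma integrable_comp_coord [IsProbabilityMeasure μ]
    (hmarg : P.map Prod.snd = Measure.pi fun _ : Fin n => μ) {g : Z → ℝ} (hg : Integrable g μ)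
    (i : Fin n) : Integrable (fun p : W × (Fin n → Z) => g (p.2 i)) P :=
  (measurePreserving_coord hmarg i).integrable_comp_of_integrable hg

lemma measurePreserving_snd_jointLaw [IsProbabilityMeasure μ]
    (hmarg : P.map Prod.snd = Measure.pi fun _ : Fin n => μ) (i : Fin n) :
    MeasurePreserving Prod.snd (jointLaw P i) μ := by
  refine ⟨measurable_snd, ?_⟩
  rw [jointLaw, Measure.map_map measurable_snd (by fun_prop)]
  exact (measurePreserving_coord hmarg i).map_eq

lemma integral_jointLaw {f : W × Z → ℝ} {i : Fin n}
    (hf : AEStronglyMeasurable f (jointLaw P i)) :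
    ∫ x, f x ∂jointLaw P i = ∫ p, f (p.1, p.2 i) ∂P :=
  integral_map (by fun_prop) hf

lemma MeasureTheory.Integrable.comp_jointLaw {f : W × Z → ℝ} {i : Fin n}
    (hf : Integrable f (jointLaw P i)) : Integrable (fun p => f (p.1, p.2 i)) P :=
  hf.comp_measurable (by fun_prop)

lemma integrable_excessLoss_jointLaw [IsProbabilityMeasure μ]
    (hmarg : P.map Prod.snd = Measure.pi fun _ : Fin n => μ) {i : Fin n}
    (hinti : Integrable ℓ (jointLaw P i)) (hintw : Integrable (fun z => ℓ (wstar, z)) μ) :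
    Integrable (excessLoss ℓ wstar) (jointLaw P i) :=
  hinti.sub ((measurePreserving_snd_jointLaw hmarg i).integrable_comp_of_integrable hintw)

lemma empExcess_eq_average [IsProbabilityMeasure μ]
    (hmarg : P.map Prod.snd = Measure.pi fun _ : Fin n => μ)
    (hinti : ∀ i, Integrable ℓ (jointLaw P i)) (hintw : Integrable (fun z => ℓ (wstar, z)) μ) :
    empExcess n P ℓ wstar = 1 / (n : ℝ) * ∑ i, ∫ x, excessLoss ℓ wstar x ∂jointLaw P i := by
  have hr := fun i => integrable_excessLoss_jointLaw hmarg (hinti i) hintw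
  have hpoint : ∀ p : W × (Fin n → Z), empRisk n ℓ p.1 p.2 - empRisk n ℓ wstar p.2
      = 1 / (n : ℝ) * ∑ i, excessLoss ℓ wstar (p.1, p.2 i) := by
    intro p
    simp only [empRisk, excessLoss, Finset.sum_sub_distrib, mul_sub]
  simp only [empExcess, hpoint, integral_jointLaw (hr _).1]
  rw [integral_const_mul, integral_finsetSum _ fun i _ => (hr i).comp_jointLaw]

lemma integral_empRisk_eq_popRisk [IsProbabilityMeasure μ] (hn : 0 < n)
    (hmarg : P.map Prod.snd = Measure.pi fun _ : Fin n => μ) {w : W}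
    (hw : Integrable (fun z => ℓ (w, z)) μ) :
    ∫ p, empRisk n ℓ w p.2 ∂P = popRisk μ ℓ w := by
  have hcoord : ∀ i, ∫ p, ℓ (w, p.2 i) ∂P = popRisk μ ℓ w := fun i =>
    (measurePreserving_coord hmarg i).integral_comp_of_aestronglyMeasurable hw.1
  calc ∫ p, empRisk n ℓ w p.2 ∂P = 1 / (n : ℝ) * ∑ i, ∫ p, ℓ (w, p.2 i) ∂P := by
        rw [← integral_finsetSum _ fun i _ => integrable_comp_coord hmarg hw i,
          ← integral_const_mul]
        rfl
    _ = popRisk μ ℓ w := by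
        simp only [hcoord, Finset.sum_const, Finset.card_univ, Fintype.card_fin, nsmul_eq_mul]
        field_simp

lemma integrable_empRisk {w : W × (Fin n → Z) → W}
    (h : ∀ i, Integrable (fun p => ℓ (w p, p.2 i)) P) :
    Integrable (fun p => empRisk n ℓ (w p) p.2) P :=
  (integrable_finsetSum _ fun i _ => h i).const_mul _

lemma integrable_popRisk_fst [IsFiniteMeasure P] [SFinite μ]
    (hint : Integrable ℓ ((P.map Prod.fst).prod μ)) :
    Integrable (fun p => popRisk μ ℓ p.1) P :=
  hint.integral_prod_left.comp_measurable measurable_fst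

lemma integral_popRisk_fst [IsFiniteMeasure P] [SFinite μ]
    (hint : Integrable ℓ ((P.map Prod.fst).prod μ)) :
    ∫ p, popRisk μ ℓ p.1 ∂P = ∫ x, ℓ x ∂(P.map Prod.fst).prod μ := by
  rw [integral_prod _ hint, integral_map measurable_fst.aemeasurable hint.integral_prod_left.1]
  rfl

lemma excessRisk_eq_sub [IsProbabilityMeasure μ] [IsProbabilityMeasure P]
    (hint : Integrable ℓ ((P.map Prod.fst).prod μ))
    (hintw : Integrable (fun z => ℓ (wstar, z)) μ) :
    excessRisk μ P ℓ wstar = ∫ x, ℓ x ∂(P.map Prod.fst).prod μ - popRisk μ ℓ wstar := by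
  have : IsProbabilityMeasure (P.map Prod.fst) :=
    Measure.isProbabilityMeasure_map measurable_fst.aemeasurable
  have hsnd : MeasurePreserving Prod.snd ((P.map Prod.fst).prod μ) μ := measurePreserving_snd
  have hintw' : Integrable (fun x : W × Z => ℓ (wstar, x.2)) ((P.map Prod.fst).prod μ) :=
    hsnd.integrable_comp_of_integrable hintw
  rw [excessRisk, integral_sub hint hintw', popRisk,
    hsnd.integral_comp_of_aestronglyMeasurable hintw.1]

lemma genErr_add_empExcess [IsProbabilityMeasure μ] [IsProbabilityMeasure P] (hn : 0 < n)
    (hmarg : P.map Prod.snd = Measure.pi fun _ : Fin n => μ)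
    (hint : Integrable ℓ ((P.map Prod.fst).prod μ)) (hinti : ∀ i, Integrable ℓ (jointLaw P i))
    (hintw : Integrable (fun z => ℓ (wstar, z)) μ) :
    genErr μ n P ℓ + empExcess n P ℓ wstar = excessRisk μ P ℓ wstar := by
  have hemp := integrable_empRisk (w := Prod.fst) fun i => (hinti i).comp_jointLaw
  have hemp' := integrable_empRisk (w := fun _ => wstar) (integrable_comp_coord hmarg hintw)
  rw [genErr, empExcess, integral_sub (integrable_popRisk_fst hint) hemp,
    integral_sub hemp hemp', integral_popRisk_fst hint, integral_empRisk_eq_popRisk hn hmarg hintw,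
    excessRisk_eq_sub hint hintw]
  ring

end Learning

theorem fast_rate_eta_c_central_general
    (μ : Measure Z) [IsProbabilityMeasure μ] (n : ℕ) (hn : 0 < n)
    (P : Measure (W × (Fin n → Z))) [IsProbabilityMeasure P]
    (hmarg : P.map Prod.snd = Measure.pi fun _ : Fin n => μ)
    (ℓ : W × Z → ℝ) (wstar : W)
    (hint : Integrable ℓ ((P.map Prod.fst).prod μ))
    (hinti : ∀ i : Fin n, Integrable ℓ (jointLaw P i))
    (hintw : Integrable (fun z => ℓ (wstar, z)) μ)
    (hac : ∀ i : Fin n, jointLaw P i ≪ (P.map Prod.fst).prod μ)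
    (hIfin : ∀ i : Fin n, Integrable (llr (jointLaw P i) ((P.map Prod.fst).prod μ))
      (jointLaw P i))
    (η c : ℝ) (hη : 0 < η) (hc : 0 < c)
    (hmgfInt : Integrable (fun p => Real.exp (-η * (ℓ p - ℓ (wstar, p.2))))
      ((P.map Prod.fst).prod μ))
    (hcentral :
      Real.log (∫ p, Real.exp (-η * (ℓ p - ℓ (wstar, p.2))) ∂((P.map Prod.fst).prod μ)) ≤
        -c * η * excessRisk μ P ℓ wstar) :
    genErr μ n P ℓ ≤
      ((1 - c) / c) * empExcess n P ℓ wstar +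
        (1 / (c * η * (n : ℝ))) * ∑ i : Fin n, mutInfo μ P i ∧
    excessRisk μ P ℓ wstar ≤
      (1 / c) * empExcess n P ℓ wstar +
        (1 / (c * η * (n : ℝ))) * ∑ i : Fin n, mutInfo μ P i := by
  have : IsProbabilityMeasure (P.map Prod.fst) :=
    Measure.isProbabilityMeasure_map measurable_fst.aemeasurable
  set R := excessRisk μ P ℓ wstar
  set K := ∑ i, mutInfo μ P i
  have hcoord : ∀ i, c * R - mutInfo μ P i / η ≤ ∫ x, excessLoss ℓ wstar x ∂jointLaw P i := by
    intro i
    have : IsProbabilityMeasure (jointLaw P i) := Measure.isProbabilityMeasure_map (by fun_prop)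
    exact sub_klReal_div_le_integral_of_log_integral_exp_le (hac i) (hIfin i)
      (integrable_excessLoss_jointLaw hmarg (hinti i) hintw) hη hmgfInt
      (hcentral.trans_eq (by ring))
  have hkey : c * R - K / (η * n) ≤ empExcess n P ℓ wstar := by
    rw [empExcess_eq_average hmarg hinti hintw]
    exact sub_sum_div_le_average hn hcoord
  set Rhat := empExcess n P ℓ wstar
  have hR : R ≤ 1 / c * Rhat + 1 / (c * η * n) * K := by
    rw [show 1 / c * Rhat + 1 / (c * η * n) * K = (Rhat + K / (η * n)) / c by ring,
      le_div_iff₀ hc]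
    linarith
  refine ⟨?_, hR⟩
  rw [show (1 - c) / c = 1 / c - 1 by field_simp]
  linarith [genErr_add_empExcess hn hmarg hint hinti hintw]

theorem fast_rate_eta_c_central
    (μ : Measure Z) [IsProbabilityMeasure μ] (n : ℕ) (hn : 0 < n)
    (P : Measure (W × (Fin n → Z))) [IsProbabilityMeasure P]
    (hmarg : P.map Prod.snd = Measure.pi fun _ : Fin n => μ)
    (ℓ : W × Z → ℝ) (hℓ : Measurable ℓ) (wstar : W)
    (hint : Integrable ℓ ((P.map Prod.fst).prod μ))
    (hinti : ∀ i : Fin n, Integrable ℓ (jointLaw P i))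
    (hintw : Integrable (fun z => ℓ (wstar, z)) μ)
    (hac : ∀ i : Fin n, jointLaw P i ≪ (P.map Prod.fst).prod μ)
    (hIfin : ∀ i : Fin n, Integrable (llr (jointLaw P i) ((P.map Prod.fst).prod μ))
      (jointLaw P i))
    (η c : ℝ) (hη : 0 < η) (hc : 0 < c) (hc1 : c ≤ 1)
    (hR : 0 < excessRisk μ P ℓ wstar)
    (hmgfInt : Integrable (fun p => Real.exp (-η * (ℓ p - ℓ (wstar, p.2))))
      ((P.map Prod.fst).prod μ))
    (hcentral :
      Real.log (∫ p, Real.exp (-η * (ℓ p - ℓ (wstar, p.2))) ∂((P.map Prod.fst).prod μ)) ≤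
        -c * η * excessRisk μ P ℓ wstar) :
    genErr μ n P ℓ ≤
      ((1 - c) / c) * empExcess n P ℓ wstar +
        (1 / (c * η * (n : ℝ))) * ∑ i : Fin n, mutInfo μ P i ∧
    excessRisk μ P ℓ wstar ≤
      (1 / c) * empExcess n P ℓ wstar +
        (1 / (c * η * (n : ℝ))) * ∑ i : Fin n, mutInfo μ P i :=
  fast_rate_eta_c_central_general μ n hn P hmarg ℓ wstar hint hinti hintw hac hIfin η c hη hc
    hmgfInt hcentral
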